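/- arXiv:1401.4206 — 2 statements merged into one kernel-verified Lean document; each statement's English description precedes it below -/
import Mathlib

section
/- Let (𝒳, ℬ, P, f) be a measure-preserving system with decay of correlations against L¹: there is a Banach space 𝒞 of functions and a non-increasing rate γ : ℕ → ℝ with γ(n) → 0, such that for all φ ∈ 𝒞 and all measurable ψ, |∫ φ·(ψ∘fⁿ) dP − ∫φ dP ∫ψ dP| ≤ ‖φ‖_𝒞 ‖ψ‖_{L¹} γ(n). Then for any A ∈ ℬ with 1_A ∈ 𝒞 and positive integers s, t, t', m with t < m: |P(𝒲_{0,s+t'+m}(A)) − P(𝒲_{0,s}(A) ∩ 𝒲_{s+t',m}(A))| ≤ t'·[P(A) + ‖1_A‖_𝒞 · γ(t)] · P(𝒲_{0,m−t}(A)). -/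
open MeasureTheory

/-- The event of avoiding `A` during the time window `[s, s+ℓ)`. -/
def avoidWindow {X : Type*} (T : X → X) (s ℓ : ℕ) (A : Set X) : Set X :=
  ⋂ i ∈ Finset.Ico s (s + ℓ), T^[i] ⁻¹' Aᶜ

/-!
A point that avoids `A` on `[0, s)` and on `[s + t', s + t' + m)` but not on `[0, s + t' + m)`
visits `A` at some time `i` of the gap `[s, s + t')`. Each of these `t'` events lies in
`f^{-i}(A ∩ f^{-n} 𝒲_{0,m-t}(A))` for some `n ≥ t`, whose measure, by invariance and decay of
correlations of `1_A` against `1_{𝒲_{0,m-t}(A)}`, is at most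
`(P(A) + N(1_A) γ(t)) P(𝒲_{0,m-t}(A))`.
-/

open Filter Topology

section

variable {X : Type*}

section Windows

variable (f : X → X) (A : Set X)

@[simp]
lemma mem_avoidWindow {s ℓ : ℕ} {x : X} :
    x ∈ avoidWindow f s ℓ A ↔ ∀ i, s ≤ i → i < s + ℓ → f^[i] x ∉ A := by
  simp [avoidWindow, and_imp]

lemma avoidWindow_subset_avoidWindow {s ℓ s' ℓ' : ℕ}
    (h : Set.Ico s' (s' + ℓ') ⊆ Set.Ico s (s + ℓ)) :
    avoidWindow f s ℓ A ⊆ avoidWindow f s' ℓ' A := by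
  intro x hx
  simp only [mem_avoidWindow] at hx ⊢
  exact fun i hi hi' => hx i (h ⟨hi, hi'⟩).1 (h ⟨hi, hi'⟩).2

lemma avoidWindow_eq_preimage (k ℓ : ℕ) :
    avoidWindow f k ℓ A = f^[k] ⁻¹' avoidWindow f 0 ℓ A := by
  ext x
  simp only [mem_avoidWindow, Set.mem_preimage, ← Function.iterate_add_apply]
  refine ⟨fun h i _ hi => h (i + k) (by omega) (by omega), fun h i hki hi => ?_⟩
  simpa [Nat.sub_add_cancel hki] using h (i - k) (Nat.zero_le _) (by omega)

lemma measurableSet_avoidWindow [MeasurableSpace X] (hf : Measurable f) (hA : MeasurableSet A)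
    (s ℓ : ℕ) : MeasurableSet (avoidWindow f s ℓ A) :=
  Finset.measurableSet_biInter _ fun i _ => hf.iterate i hA.compl

lemma avoidWindow_inter_subset_union (s t' m : ℕ) :
    avoidWindow f 0 s A ∩ avoidWindow f (s + t') m A ⊆
      avoidWindow f 0 (s + t' + m) A ∪
        ⋃ i ∈ Finset.Ico s (s + t'), f^[i] ⁻¹' A ∩ avoidWindow f (s + t') m A := by
  rintro x ⟨hx₁, hx₂⟩
  by_cases hx₀ : x ∈ avoidWindow f 0 (s + t' + m) A
  · exact Or.inl hx₀
  simp only [mem_avoidWindow, not_forall, not_not] at hx₀ hx₁ hx₂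
  obtain ⟨i, -, hi, hxi⟩ := hx₀
  have hsi : s ≤ i := by_contra fun h => hx₁ i (Nat.zero_le _) (by omega) hxi
  have hit' : i < s + t' := by_contra fun h => hx₂ i (by omega) (by omega) hxi
  refine Or.inr (Set.mem_biUnion (Finset.mem_Ico.2 ⟨hsi, hit'⟩) ⟨hxi, ?_⟩)
  simpa only [mem_avoidWindow] using hx₂

/-- The delay `n = max t (s + t' - i)` puts the window `[i + n, i + n + m - t)` inside
`[s + t', s + t' + m)`. -/
lemma exists_preimage_inter_avoidWindow_subset {i s t' : ℕ} (hi : i ≤ s + t') (t m : ℕ) :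
    ∃ n, t ≤ n ∧ f^[i] ⁻¹' A ∩ avoidWindow f (s + t') m A ⊆
      f^[i] ⁻¹' (A ∩ f^[n] ⁻¹' avoidWindow f 0 (m - t) A) := by
  refine ⟨t + (s + t' - (i + t)), Nat.le_add_right _ _, ?_⟩
  rintro x ⟨hxA, hxW⟩
  refine ⟨hxA, ?_⟩
  have hx := avoidWindow_subset_avoidWindow f A (s' := t + (s + t' - (i + t)) + i)
    (ℓ' := m - t) (fun j hj => by simp only [Set.mem_Ico] at hj ⊢; omega) hxW
  rwa [avoidWindow_eq_preimage, Set.mem_preimage, Function.iterate_add_apply] at hx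

end Windows

lemma Antitone.mul_le_mul_of_nonneg {γ : ℕ → ℝ} (hγ : Antitone γ) (hγ₀ : ∀ k, 0 ≤ γ k)
    {c : ℝ} {t n : ℕ} (hc : 0 ≤ c * γ t) (htn : t ≤ n) : c * γ n ≤ c * γ t := by
  rcases (hγ₀ t).eq_or_lt with hγt | hγt
  · rw [← hγt, le_antisymm (hγt ▸ hγ htn) (hγ₀ n)]
  · exact mul_le_mul_of_nonneg_left (hγ htn) (nonneg_of_mul_nonneg_left hc hγt)

section Decay

variable [MeasurableSpace X] {μ : Measure X} {f : X → X} {A B : Set X}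

lemma integral_indicator_one_mul_indicator_one_comp {g : X → X} (hg : Measurable g)
    (hA : MeasurableSet A) (hB : MeasurableSet B) :
    ∫ x, A.indicator 1 x * B.indicator 1 (g x) ∂μ = μ.real (A ∩ g ⁻¹' B) := by
  rw [← integral_indicator_one (hA.inter (hg hB)), Set.inter_indicator_one]
  rfl

lemma measureReal_inter_preimage_le_of_decay [IsFiniteMeasure μ] {C : ℝ} {γ : ℕ → ℝ}
    (hγ : Antitone γ) (hγ₀ : Tendsto γ atTop (𝓝 0)) (hf : Measurable f)
    (hA : MeasurableSet A) (hB : MeasurableSet B)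
    (hdecay : ∀ ψ : X → ℝ, Integrable ψ μ → ∀ n : ℕ,
      |(∫ x, A.indicator 1 x * ψ (f^[n] x) ∂μ) - (∫ x, A.indicator 1 x ∂μ) * ∫ x, ψ x ∂μ| ≤
        C * (∫ x, |ψ x| ∂μ) * γ n)
    {t n : ℕ} (htn : t ≤ n) :
    μ.real (A ∩ f^[n] ⁻¹' B) ≤ (μ.real A + C * γ t) * μ.real B := by
  have hcorr : ∀ k,
      |μ.real (A ∩ f^[k] ⁻¹' B) - μ.real A * μ.real B| ≤ C * μ.real B * γ k := by
    intro k
    have habs : ∫ x, |B.indicator (1 : X → ℝ) x| ∂μ = μ.real B := by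
      rw [← integral_indicator_one hB]
      congr with x
      exact abs_of_nonneg (Set.indicator_nonneg (fun _ _ => zero_le_one) x)
    simpa [integral_indicator_one_mul_indicator_one_comp (hf.iterate k) hA hB,
      integral_indicator_one hA, integral_indicator_one hB, habs] using
      hdecay (B.indicator 1) ((integrable_const 1).indicator hB) k
  have hγn : C * μ.real B * γ n ≤ C * μ.real B * γ t :=
    hγ.mul_le_mul_of_nonneg (hγ.le_of_tendsto hγ₀) ((abs_nonneg _).trans (hcorr t)) htn
  linarith [(abs_le.1 (hcorr n)).2]

end Decay

lemma measureReal_avoidWindow_inter_sub_le [MeasurableSpace X] (μ : Measure X)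
    [IsFiniteMeasure μ] (f : X → X) (A : Set X) (s t' m : ℕ) :
    μ.real (avoidWindow f 0 s A ∩ avoidWindow f (s + t') m A) -
        μ.real (avoidWindow f 0 (s + t' + m) A) ≤
      ∑ i ∈ Finset.Ico s (s + t'), μ.real (f^[i] ⁻¹' A ∩ avoidWindow f (s + t') m A) := by
  have hcover := measureReal_mono (μ := μ) (avoidWindow_inter_subset_union f A s t' m)
  grw [measureReal_union_le, measureReal_biUnion_finset_le] at hcover
  linarith

end

theorem time_gap_estimate_L1_general {X : Type*} [MeasurableSpace X] (μ : Measure X)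
    [IsProbabilityMeasure μ] (f : X → X) (hf : MeasurePreserving f μ μ)
    (𝒞 : Set (X → ℝ)) (N : (X → ℝ) → ℝ) (γ : ℕ → ℝ)
    (hγmono : Antitone γ) (hγ0 : Filter.Tendsto γ Filter.atTop (nhds 0))
    (hdecay : ∀ φ ∈ 𝒞, ∀ ψ : X → ℝ, Integrable ψ μ → ∀ n : ℕ,
      |(∫ x, φ x * ψ (f^[n] x) ∂μ) - (∫ x, φ x ∂μ) * ∫ x, ψ x ∂μ| ≤
        N φ * (∫ x, |ψ x| ∂μ) * γ n)
    (A : Set X) (hA : MeasurableSet A)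
    (hind : A.indicator (fun _ => (1 : ℝ)) ∈ 𝒞)
    (s t t' m : ℕ) :
    |(μ (avoidWindow f 0 (s + t' + m) A)).toReal -
        (μ (avoidWindow f 0 s A ∩ avoidWindow f (s + t') m A)).toReal| ≤
      (t' : ℝ) * ((μ A).toReal + N (A.indicator fun _ => (1 : ℝ)) * γ t) *
        (μ (avoidWindow f 0 (m - t) A)).toReal := by
  simp only [← measureReal_def]
  have hW₀ :
      avoidWindow f 0 (s + t' + m) A ⊆ avoidWindow f 0 s A ∩ avoidWindow f (s + t') m A :=
    Set.subset_inter
      (avoidWindow_subset_avoidWindow f A (Set.Ico_subset_Ico le_rfl (by omega)))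
      (avoidWindow_subset_avoidWindow f A (Set.Ico_subset_Ico (Nat.zero_le _) (by omega)))
  have hhit : ∀ i ∈ Finset.Ico s (s + t'),
      μ.real (f^[i] ⁻¹' A ∩ avoidWindow f (s + t') m A) ≤
        (μ.real A + N (A.indicator fun _ => 1) * γ t) * μ.real (avoidWindow f 0 (m - t) A) := by
    intro i hi
    have hW := measurableSet_avoidWindow f A hf.measurable hA 0 (m - t)
    obtain ⟨n, htn, hsub⟩ :=
      exists_preimage_inter_avoidWindow_subset f A (Finset.mem_Ico.1 hi).2.le t m
    calc _ ≤ μ.real (f^[i] ⁻¹' (A ∩ f^[n] ⁻¹' avoidWindow f 0 (m - t) A)) :=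
          measureReal_mono hsub
      _ = μ.real (A ∩ f^[n] ⁻¹' avoidWindow f 0 (m - t) A) :=
        (hf.iterate i).measureReal_preimage
          (hA.inter (hf.measurable.iterate n hW)).nullMeasurableSet
      _ ≤ _ := measureReal_inter_preimage_le_of_decay hγmono hγ0 hf.measurable hA hW
          (hdecay _ hind) htn
  rw [abs_sub_comm, abs_of_nonneg (sub_nonneg.2 (measureReal_mono hW₀))]
  calc _ ≤ _ := measureReal_avoidWindow_inter_sub_le μ f A s t' m
    _ ≤ _ := Finset.sum_le_sum hhit
    _ = _ := by simp [mul_assoc]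

theorem time_gap_estimate_L1 {X : Type*} [MeasurableSpace X] (μ : Measure X)
    [IsProbabilityMeasure μ] (f : X → X) (hf : MeasurePreserving f μ μ)
    (𝒞 : Set (X → ℝ)) (N : (X → ℝ) → ℝ) (γ : ℕ → ℝ)
    (hγmono : Antitone γ) (hγ0 : Filter.Tendsto γ Filter.atTop (nhds 0))
    (hdecay : ∀ φ ∈ 𝒞, ∀ ψ : X → ℝ, Integrable ψ μ → ∀ n : ℕ,
      |(∫ x, φ x * ψ (f^[n] x) ∂μ) - (∫ x, φ x ∂μ) * ∫ x, ψ x ∂μ| ≤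
        N φ * (∫ x, |ψ x| ∂μ) * γ n)
    (A : Set X) (hA : MeasurableSet A)
    (hind : A.indicator (fun _ => (1 : ℝ)) ∈ 𝒞)
    (s t t' m : ℕ) (hs : 0 < s) (ht : 0 < t) (ht' : 0 < t') (hm : 0 < m)
    (htm : t < m) :
    |(μ (avoidWindow f 0 (s + t' + m) A)).toReal -
        (μ (avoidWindow f 0 s A ∩ avoidWindow f (s + t') m A)).toReal| ≤
      (t' : ℝ) * ((μ A).toReal + N (A.indicator fun _ => (1 : ℝ)) * γ t) *
        (μ (avoidWindow f 0 (m - t) A)).toReal :=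
  time_gap_estimate_L1_general μ f hf 𝒞 N γ hγmono hγ0 hdecay A hA hind s t t' m
end

section
/- Under decay of correlations against L¹ with non-increasing rate γ → 0, for any A, B ∈ ℬ with 1_A ∈ 𝒞 and positive integers s, t, m: |P(𝒲_{0,s}(A) ∩ f^{-(s+t)}(B)) − P(B)(1 − s·P(A))| ≤ Ξ_{A,s} · P(B), where Ξ_{A,s} := ‖1_A‖_𝒞 · s · γ(t) + ‖1_A‖_𝒞 (s − R(A)) [P(A) + ‖1_A‖_𝒞 γ(t)] ∑_{q=R(A)}^{s-1} γ(q) + s(s − R(A)) [P(A)² + P(A)‖1_A‖_𝒞 γ(t)]. -/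
open MeasureTheory

/-!
With `T i = f⁻ⁱ A ∩ f^{-(s+t)} B`, the event is `f^{-(s+t)} B \ ⋃_{i<s} T i`, and the Bonferroni
inequalities squeeze `P(⋃ T i)` between `∑ P(T i) - ∑_{i<j} P(T i ∩ T j)` and `∑ P(T i)`.
By invariance, decay of correlations for `φ = 1_A` gives `P(T i) = P(A) P(B) ± N γ(t) P(B)`;
applied twice it gives `P(T i ∩ T j) ≤ (P(A) + N γ(j - i)) (P(A) + N γ(t)) P(B)`, while the
pairs with `0 < j - i < R` are empty by the definition of the return time. Counting the pairs
by their gap `q = j - i ∈ [R, s)`, each gap occurs at most `s - R` times.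
-/

open Finset

theorem sum_range_sum_range_sub_le {w : ℕ → ℝ} (hw : ∀ q, 0 ≤ w q) (s : ℕ) :
    ∑ j ∈ range s, ∑ i ∈ range j, w (j - i) ≤ ∑ q ∈ range s, ((s : ℝ) - q) * w q := by
  calc ∑ j ∈ range s, ∑ i ∈ range j, w (j - i)
      ≤ ∑ j ∈ range s, ∑ i ∈ range (j + 1), w (j - i) :=
        sum_le_sum fun j _ => by rw [sum_range_succ]; exact le_add_of_nonneg_right (hw _)
    _ = ∑ j ∈ range s, ∑ i ∈ range (j + 1), w i :=
        sum_congr rfl fun j _ => by simpa using sum_range_reflect w (j + 1)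
    _ = ∑ q ∈ range s, ∑ _j ∈ Ico q s, w q :=
        sum_comm' fun j q => by simp only [mem_range, mem_Ico]; omega
    _ = ∑ q ∈ range s, ((s : ℝ) - q) * w q :=
        sum_congr rfl fun q hq => by
          rw [sum_const, Nat.card_Ico, nsmul_eq_mul, Nat.cast_sub (mem_range.1 hq).le]

theorem sum_range_sum_range_le_of_le_gap {R s : ℕ} {p : ℕ → ℕ → ℝ} {K L : ℝ} {δ : ℕ → ℝ}
    (hK : 0 ≤ K) (hL : 0 ≤ L) (hδ : ∀ q, 0 ≤ δ q)
    (hnear : ∀ i j, i < j → j - i < R → p i j = 0)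
    (hfar : ∀ i j, i < j → j < s → R ≤ j - i → p i j ≤ K + L * δ (j - i)) :
    ∑ j ∈ range s, ∑ i ∈ range j, p i j ≤
      s * (s - R : ℕ) * K + (s - R : ℕ) * L * ∑ q ∈ Ico R s, δ q := by
  set w : ℕ → ℝ := fun q => if R ≤ q then K + L * δ q else 0
  have hw : ∀ q, 0 ≤ w q := fun q => by
    simp only [w]; split_ifs
    exacts [add_nonneg hK (mul_nonneg hL (hδ q)), le_rfl]
  have hpw : ∀ j ∈ range s, ∑ i ∈ range j, p i j ≤ ∑ i ∈ range j, w (j - i) :=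
    fun j hj => sum_le_sum fun i hi => by
      have hij := mem_range.1 hi
      simp only [w]; split_ifs with h
      exacts [hfar i j hij (mem_range.1 hj) h, (hnear i j hij (not_le.1 h)).le]
  have hfilter : (range s).filter (R ≤ ·) = Ico R s := by
    ext q; simp only [mem_filter, mem_range, mem_Ico]; omega
  calc ∑ j ∈ range s, ∑ i ∈ range j, p i j
      ≤ ∑ q ∈ range s, ((s : ℝ) - q) * w q :=
        (sum_le_sum hpw).trans (sum_range_sum_range_sub_le hw s)
    _ = ∑ q ∈ Ico R s, ((s : ℝ) - q) * (K + L * δ q) := by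
        simp only [w, mul_ite, mul_zero]; rw [← sum_filter, hfilter]
    _ ≤ ∑ q ∈ Ico R s, (s * K + (s - R : ℕ) * L * δ q) := sum_le_sum fun q hq => by
        obtain ⟨hRq, hqs⟩ := mem_Ico.1 hq
        have hsR : ((s - R : ℕ) : ℝ) = s - R := Nat.cast_sub (hRq.trans hqs.le)
        have hRq' : (R : ℝ) ≤ q := by exact_mod_cast hRq
        have hK' : ((s : ℝ) - q) * K ≤ s * K :=
          mul_le_mul_of_nonneg_right (by linarith [q.cast_nonneg (α := ℝ)]) hK
        have hL' : ((s : ℝ) - q) * (L * δ q) ≤ (s - R) * L * δ q := by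
          rw [mul_assoc]; exact mul_le_mul_of_nonneg_right (by linarith) (mul_nonneg hL (hδ q))
        rw [hsR, mul_add]
        exact add_le_add hK' hL'
    _ = s * (s - R : ℕ) * K + (s - R : ℕ) * L * ∑ q ∈ Ico R s, δ q := by
        rw [sum_add_distrib, sum_const, Nat.card_Ico, nsmul_eq_mul, mul_sum]; ring

theorem Antitone.const_mul_of_mul_nonneg {γ : ℕ → ℝ} {c : ℝ} (hγ : Antitone γ)
    (hγ0 : ∀ n, 0 ≤ γ n) (hcγ : ∀ n, 0 ≤ c * γ n) : Antitone fun n => c * γ n := by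
  rcases le_or_gt 0 c with hc | hc
  · exact hγ.const_mul hc
  · have hzero : ∀ n, γ n = 0 := fun n =>
      le_antisymm (nonpos_of_mul_nonneg_right (hcγ n) hc) (hγ0 n)
    intro m n _
    simp [hzero]

section Bonferroni

variable {X : Type*} [MeasurableSpace X] (μ : Measure X) [IsFiniteMeasure μ]

theorem sum_measureReal_le_measureReal_biUnion_add {g : ℕ → Set X}
    (hg : ∀ i, MeasurableSet (g i)) (n : ℕ) :
    ∑ i ∈ range n, μ.real (g i) ≤
      μ.real (⋃ i ∈ range n, g i) + ∑ j ∈ range n, ∑ i ∈ range j, μ.real (g i ∩ g j) := by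
  induction n with
  | zero => simp
  | succ n ih =>
    set U := ⋃ i ∈ range n, g i
    have hunion : ⋃ i ∈ range (n + 1), g i = U ∪ g n := by
      rw [range_add_one, set_biUnion_insert, Set.union_comm]
    have hinter : μ.real (U ∩ g n) ≤ ∑ i ∈ range n, μ.real (g i ∩ g n) := by
      rw [Set.iUnion₂_inter]; exact measureReal_biUnion_finset_le _ _
    rw [sum_range_succ, sum_range_succ, hunion]
    linarith [measureReal_union_add_inter (hg n) (measure_ne_top μ U)]

end Bonferroni

section Dynamics

variable {X : Type*}

theorem preimage_iterate_inter_preimage_iterate (f : X → X) (A E : Set X) {i n : ℕ}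
    (h : i ≤ n) : f^[i] ⁻¹' A ∩ f^[n] ⁻¹' E = f^[i] ⁻¹' (A ∩ f^[n - i] ⁻¹' E) := by
  rw [Set.preimage_inter, ← Set.preimage_comp, ← Function.iterate_add, Nat.sub_add_cancel h]

theorem avoidWindow_zero (f : X → X) (s : ℕ) (A : Set X) :
    avoidWindow f 0 s A = (⋃ i ∈ range s, f^[i] ⁻¹' A)ᶜ := by
  simp only [avoidWindow, zero_add, ← range_eq_Ico, Set.compl_iUnion, Set.preimage_compl]

theorem preimage_iterate_inter_preimage_iterate_eq_empty {f : X → X} {A : Set X} {R : ℕ}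
    (hR : ∀ i, 0 < i → i < R → A ∩ f^[i] ⁻¹' A = ∅) {i j : ℕ} (hij : i < j) (hjiR : j - i < R) :
    f^[i] ⁻¹' A ∩ f^[j] ⁻¹' A = ∅ := by
  rw [preimage_iterate_inter_preimage_iterate f A A hij.le, hR _ (by omega) hjiR,
    Set.preimage_empty]

variable [MeasurableSpace X] {μ : Measure X} {f : X → X} {A : Set X}

variable (μ f A) in
def HasCorrelationRate (δ : ℕ → ℝ) : Prop :=
  ∀ E, MeasurableSet E → ∀ n,
    |μ.real (A ∩ f^[n] ⁻¹' E) - μ.real A * μ.real E| ≤ δ n * μ.real E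

theorem hasCorrelationRate_of_decay [IsFiniteMeasure μ] (hf : Measurable f)
    (hA : MeasurableSet A) {c : ℝ} {γ : ℕ → ℝ}
    (hdecay : ∀ ψ : X → ℝ, Integrable ψ μ → ∀ n : ℕ,
      |(∫ x, A.indicator (fun _ => (1 : ℝ)) x * ψ (f^[n] x) ∂μ) -
        (∫ x, A.indicator (fun _ => (1 : ℝ)) x ∂μ) * ∫ x, ψ x ∂μ| ≤
        c * (∫ x, |ψ x| ∂μ) * γ n) :
    HasCorrelationRate μ f A fun n => c * γ n := by
  intro E hE n
  have hEn : MeasurableSet (f^[n] ⁻¹' E) := hf.iterate n hE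
  have hone : (fun _ : X => (1 : ℝ)) = 1 := rfl
  have hprod : (fun x => A.indicator 1 x * E.indicator 1 (f^[n] x))
      = (A ∩ f^[n] ⁻¹' E).indicator (1 : X → ℝ) := by
    rw [Set.inter_indicator_one]; rfl
  have habs : (fun x => |E.indicator (1 : X → ℝ) x|) = E.indicator 1 :=
    funext fun x => abs_of_nonneg (Set.indicator_nonneg (fun _ _ => zero_le_one) x)
  have h := hdecay _ ((integrable_const 1).indicator hE) n
  simp only [hone, hprod, habs, integral_indicator_one hA, integral_indicator_one hE,
    integral_indicator_one (hA.inter hEn)] at h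
  linarith [h]

theorem measureReal_avoidWindow_zero_inter [IsFiniteMeasure μ] (hf : Measurable f)
    (hA : MeasurableSet A) {C : Set X} (hC : MeasurableSet C) (s : ℕ) :
    μ.real (avoidWindow f 0 s A ∩ C) = μ.real C - μ.real (⋃ i ∈ range s, f^[i] ⁻¹' A ∩ C) := by
  have hU : MeasurableSet (⋃ i ∈ range s, f^[i] ⁻¹' A ∩ C) :=
    Finset.measurableSet_biUnion _ fun i _ => (hf.iterate i hA).inter hC
  have hCU : C ∩ ⋃ i ∈ range s, f^[i] ⁻¹' A ∩ C = ⋃ i ∈ range s, f^[i] ⁻¹' A ∩ C :=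
    Set.inter_eq_right.2 (Set.iUnion₂_subset fun i _ => Set.inter_subset_right)
  have hsplit := measureReal_inter_add_sdiff (μ := μ) (s := C) hU
  rw [hCU] at hsplit
  rw [avoidWindow_zero, Set.inter_comm, ← Set.sdiff_eq, ← Set.sdiff_inter_self_eq_sdiff,
    Set.iUnion₂_inter]
  linarith

namespace HasCorrelationRate

variable {δ : ℕ → ℝ}

theorem nonneg [IsProbabilityMeasure μ] (hcorr : HasCorrelationRate μ f A δ) (n : ℕ) :
    0 ≤ δ n := by
  simpa using hcorr Set.univ MeasurableSet.univ n

theorem measureReal_inter_preimage_le (hcorr : HasCorrelationRate μ f A δ) {E : Set X}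
    (hE : MeasurableSet E) (n : ℕ) :
    μ.real (A ∩ f^[n] ⁻¹' E) ≤ (μ.real A + δ n) * μ.real E := by
  linarith [(abs_le.1 (hcorr E hE n)).2]

theorem abs_measureReal_preimage_inter_preimage_sub_le (hcorr : HasCorrelationRate μ f A δ)
    (hf : MeasurePreserving f μ μ) (hδ : Antitone δ) (hA : MeasurableSet A) {B : Set X}
    (hB : MeasurableSet B) {i n t : ℕ} (hi : i + t ≤ n) :
    |μ.real (f^[i] ⁻¹' A ∩ f^[n] ⁻¹' B) - μ.real A * μ.real B| ≤ δ t * μ.real B := by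
  rw [preimage_iterate_inter_preimage_iterate f A B (by omega),
    (hf.iterate i).measureReal_preimage (hA.inter (hf.measurable.iterate _ hB)).nullMeasurableSet]
  exact (hcorr B hB _).trans (mul_le_mul_of_nonneg_right (hδ (by omega)) measureReal_nonneg)

theorem measureReal_preimage_inter_preimage_inter_preimage_le [IsProbabilityMeasure μ]
    (hcorr : HasCorrelationRate μ f A δ) (hf : MeasurePreserving f μ μ) (hδ : Antitone δ)
    (hA : MeasurableSet A) {B : Set X} (hB : MeasurableSet B) {i j n t : ℕ} (hij : i ≤ j)
    (hj : j + t ≤ n) :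
    μ.real (f^[i] ⁻¹' A ∩ f^[j] ⁻¹' A ∩ f^[n] ⁻¹' B) ≤
      (μ.real A + δ (j - i)) * ((μ.real A + δ t) * μ.real B) := by
  have hD : MeasurableSet (A ∩ f^[n - j] ⁻¹' B) := hA.inter (hf.measurable.iterate _ hB)
  rw [Set.inter_assoc, preimage_iterate_inter_preimage_iterate f A B (by omega),
    preimage_iterate_inter_preimage_iterate f A _ hij,
    (hf.iterate i).measureReal_preimage (hA.inter (hf.measurable.iterate _ hD)).nullMeasurableSet]
  have hDle : μ.real (A ∩ f^[n - j] ⁻¹' B) ≤ (μ.real A + δ t) * μ.real B :=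
    (hcorr.measureReal_inter_preimage_le hB _).trans
      (mul_le_mul_of_nonneg_right (by linarith [hδ (show t ≤ n - j by omega)]) measureReal_nonneg)
  exact (hcorr.measureReal_inter_preimage_le hD _).trans
    (mul_le_mul_of_nonneg_left hDle (add_nonneg measureReal_nonneg (hcorr.nonneg _)))

theorem abs_sum_measureReal_preimage_inter_preimage_sub_le (hcorr : HasCorrelationRate μ f A δ)
    (hf : MeasurePreserving f μ μ) (hδ : Antitone δ) (hA : MeasurableSet A) {B : Set X}
    (hB : MeasurableSet B) (s t : ℕ) :
    |∑ i ∈ range s, μ.real (f^[i] ⁻¹' A ∩ f^[s + t] ⁻¹' B) - s * (μ.real A * μ.real B)| ≤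
      s * (δ t * μ.real B) := by
  calc |∑ i ∈ range s, μ.real (f^[i] ⁻¹' A ∩ f^[s + t] ⁻¹' B) - s * (μ.real A * μ.real B)|
      = |∑ i ∈ range s, (μ.real (f^[i] ⁻¹' A ∩ f^[s + t] ⁻¹' B) - μ.real A * μ.real B)| := by
        rw [sum_sub_distrib, sum_const, card_range, nsmul_eq_mul]
    _ ≤ ∑ i ∈ range s, |μ.real (f^[i] ⁻¹' A ∩ f^[s + t] ⁻¹' B) - μ.real A * μ.real B| :=
        abs_sum_le_sum_abs _ _
    _ ≤ ∑ _i ∈ range s, δ t * μ.real B := sum_le_sum fun i hi =>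
        hcorr.abs_measureReal_preimage_inter_preimage_sub_le hf hδ hA hB
          (by rw [mem_range] at hi; omega)
    _ = s * (δ t * μ.real B) := by rw [sum_const, card_range, nsmul_eq_mul]

theorem abs_measureReal_avoidWindow_inter_preimage_sub_le [IsProbabilityMeasure μ]
    (hcorr : HasCorrelationRate μ f A δ) (hf : MeasurePreserving f μ μ) (hδ : Antitone δ)
    (hA : MeasurableSet A) {B : Set X} (hB : MeasurableSet B) {R : ℕ}
    (hR : ∀ i, 0 < i → i < R → A ∩ f^[i] ⁻¹' A = ∅) (s t : ℕ) :
    |μ.real (avoidWindow f 0 s A ∩ f^[s + t] ⁻¹' B) - μ.real B * (1 - s * μ.real A)| ≤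
      (s * δ t + (s - R : ℕ) * (μ.real A + δ t) * ∑ q ∈ Ico R s, δ q +
        s * (s - R : ℕ) * (μ.real A ^ 2 + μ.real A * δ t)) * μ.real B := by
  set a := μ.real A
  set b := μ.real B
  set C := f^[s + t] ⁻¹' B
  set T : ℕ → Set X := fun i => f^[i] ⁻¹' A ∩ C
  have hT : ∀ i, MeasurableSet (T i) := fun i =>
    (hf.measurable.iterate i hA).inter (hf.measurable.iterate _ hB)
  have hδ0 := hcorr.nonneg
  have hwindow := measureReal_avoidWindow_zero_inter (μ := μ) (C := C) hf.measurable hA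
    (hf.measurable.iterate _ hB) s
  rw [(hf.iterate _).measureReal_preimage hB.nullMeasurableSet] at hwindow
  have hsingle := hcorr.abs_sum_measureReal_preimage_inter_preimage_sub_le hf hδ hA hB s t
  have hpairs : ∑ j ∈ range s, ∑ i ∈ range j, μ.real (T i ∩ T j) ≤
      s * (s - R : ℕ) * ((a ^ 2 + a * δ t) * b) +
        (s - R : ℕ) * ((a + δ t) * b) * ∑ q ∈ Ico R s, δ q := by
    have ha : 0 ≤ a := measureReal_nonneg
    have hb : 0 ≤ b := measureReal_nonneg
    refine sum_range_sum_range_le_of_le_gap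
      (mul_nonneg (add_nonneg (sq_nonneg a) (mul_nonneg ha (hδ0 t))) hb)
      (mul_nonneg (add_nonneg ha (hδ0 t)) hb) hδ0 (fun i j hij hjiR => ?_)
      (fun i j hij hjs _ => ?_)
    · rw [← Set.inter_inter_distrib_right,
        preimage_iterate_inter_preimage_iterate_eq_empty hR hij hjiR, Set.empty_inter,
        measureReal_empty]
    · rw [← Set.inter_inter_distrib_right]
      exact (hcorr.measureReal_preimage_inter_preimage_inter_preimage_le hf hδ hA hB hij.le
        (by omega : j + t ≤ s + t)).trans_eq (by ring)
  have hpairs0 : 0 ≤ ∑ j ∈ range s, ∑ i ∈ range j, μ.real (T i ∩ T j) :=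
    sum_nonneg fun _ _ => sum_nonneg fun _ _ => measureReal_nonneg
  have hbonferroni := sum_measureReal_le_measureReal_biUnion_add μ hT s
  have hunion := measureReal_biUnion_finset_le (μ := μ) (range s) T
  obtain ⟨hsingle_lower, hsingle_upper⟩ := abs_le.1 hsingle
  rw [hwindow, abs_le]
  constructor <;> linarith

end HasCorrelationRate

end Dynamics

theorem inductive_step_estimate_L1_general {X : Type*} [MeasurableSpace X] (μ : Measure X)
    [IsProbabilityMeasure μ] (f : X → X) (hf : MeasurePreserving f μ μ)
    (𝒞 : Set (X → ℝ)) (N : (X → ℝ) → ℝ) (γ : ℕ → ℝ)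
    (hγmono : Antitone γ) (hγ0 : Filter.Tendsto γ Filter.atTop (nhds 0))
    (hdecay : ∀ φ ∈ 𝒞, ∀ ψ : X → ℝ, Integrable ψ μ → ∀ n : ℕ,
      |(∫ x, φ x * ψ (f^[n] x) ∂μ) - (∫ x, φ x ∂μ) * ∫ x, ψ x ∂μ| ≤
        N φ * (∫ x, |ψ x| ∂μ) * γ n)
    (A B : Set X) (hA : MeasurableSet A) (hB : MeasurableSet B)
    (hind : A.indicator (fun _ => (1 : ℝ)) ∈ 𝒞)
    -- `R` is the first return time of the set `A`:
    -- `A` does not intersect its preimages before time `R`.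
    (R : ℕ) (hR : ∀ i, 0 < i → i < R → A ∩ f^[i] ⁻¹' A = ∅)
    (s t : ℕ) :
    |(μ (avoidWindow f 0 s A ∩ f^[s + t] ⁻¹' B)).toReal -
        (μ B).toReal * (1 - (s : ℝ) * (μ A).toReal)| ≤
      (N (A.indicator fun _ => (1 : ℝ)) * (s : ℝ) * γ t +
          N (A.indicator fun _ => (1 : ℝ)) * ((s - R : ℕ) : ℝ) *
            ((μ A).toReal + N (A.indicator fun _ => (1 : ℝ)) * γ t) *
            ∑ q ∈ Finset.Ico R s, γ q +
          (s : ℝ) * ((s - R : ℕ) : ℝ) *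
            ((μ A).toReal ^ 2 +
              (μ A).toReal * N (A.indicator fun _ => (1 : ℝ)) * γ t)) *
        (μ B).toReal := by
  set c := N (A.indicator fun _ => (1 : ℝ))
  have hcorr : HasCorrelationRate μ f A fun n => c * γ n :=
    hasCorrelationRate_of_decay hf.measurable hA (hdecay _ hind)
  have hδ : Antitone fun n => c * γ n :=
    hγmono.const_mul_of_mul_nonneg (hγmono.le_of_tendsto hγ0) hcorr.nonneg
  have h := hcorr.abs_measureReal_avoidWindow_inter_preimage_sub_le hf hδ hA hB hR s t
  rw [← mul_sum] at h
  simp only [measureReal_def] at h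
  convert h using 2
  ring

theorem inductive_step_estimate_L1 {X : Type*} [MeasurableSpace X] (μ : Measure X)
    [IsProbabilityMeasure μ] (f : X → X) (hf : MeasurePreserving f μ μ)
    (𝒞 : Set (X → ℝ)) (N : (X → ℝ) → ℝ) (γ : ℕ → ℝ)
    (hγmono : Antitone γ) (hγ0 : Filter.Tendsto γ Filter.atTop (nhds 0))
    (hdecay : ∀ φ ∈ 𝒞, ∀ ψ : X → ℝ, Integrable ψ μ → ∀ n : ℕ,
      |(∫ x, φ x * ψ (f^[n] x) ∂μ) - (∫ x, φ x ∂μ) * ∫ x, ψ x ∂μ| ≤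
        N φ * (∫ x, |ψ x| ∂μ) * γ n)
    (A B : Set X) (hA : MeasurableSet A) (hB : MeasurableSet B)
    (hind : A.indicator (fun _ => (1 : ℝ)) ∈ 𝒞)
    -- `R` is the first return time of the set `A`:
    -- `A` does not intersect its preimages before time `R`.
    (R : ℕ) (hR : ∀ i, 0 < i → i < R → A ∩ f^[i] ⁻¹' A = ∅)
    (s t m : ℕ) (hs : 0 < s) (ht : 0 < t) (hm : 0 < m) :
    |(μ (avoidWindow f 0 s A ∩ f^[s + t] ⁻¹' B)).toReal -
        (μ B).toReal * (1 - (s : ℝ) * (μ A).toReal)| ≤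
      (N (A.indicator fun _ => (1 : ℝ)) * (s : ℝ) * γ t +
          N (A.indicator fun _ => (1 : ℝ)) * ((s - R : ℕ) : ℝ) *
            ((μ A).toReal + N (A.indicator fun _ => (1 : ℝ)) * γ t) *
            ∑ q ∈ Finset.Ico R s, γ q +
          (s : ℝ) * ((s - R : ℕ) : ℝ) *
            ((μ A).toReal ^ 2 +
              (μ A).toReal * N (A.indicator fun _ => (1 : ℝ)) * γ t)) *
        (μ B).toReal :=
  inductive_step_estimate_L1_general μ f hf 𝒞 N γ hγmono hγ0 hdecay A B hA hB hind R hR s t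
end
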